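/- arXiv:2410.07730 — 3 statements merged into one kernel-verified Lean document; each statement's English description precedes it below -/
import Mathlib

section
/- With h² = (b₁−b₂)² + b₁²b₂² and λ = (√(4+h²)+√(h²))/2, the identity λ² − b₁² − 1 = 2(b₁²+1)²(b₂ − b₁/(1+b₁²))² / (√(h²)·√(h²+4) − h² + 2b₁²) holds for all real b₁, b₂ with the denominator nonzero. -/
/-- Identity
`λ² − b₁² − 1 = 2(b₁²+1)²(b₂ − b₁/(1+b₁²))² / (√(h²)√(h²+4) − h² + 2b₁²)`
with `h² = (b₁−b₂)² + b₁²b₂²` and `λ = (√(4+h²)+√(h²))/2`. -/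
theorem stmt6 (b₁ b₂ : ℝ)
    (hden : Real.sqrt ((b₁ - b₂) ^ 2 + b₁ ^ 2 * b₂ ^ 2) *
        Real.sqrt (((b₁ - b₂) ^ 2 + b₁ ^ 2 * b₂ ^ 2) + 4) -
        ((b₁ - b₂) ^ 2 + b₁ ^ 2 * b₂ ^ 2) + 2 * b₁ ^ 2 ≠ 0) :
    ((Real.sqrt (4 + ((b₁ - b₂) ^ 2 + b₁ ^ 2 * b₂ ^ 2)) +
        Real.sqrt ((b₁ - b₂) ^ 2 + b₁ ^ 2 * b₂ ^ 2)) / 2) ^ 2 - b₁ ^ 2 - 1 =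
      2 * (b₁ ^ 2 + 1) ^ 2 * (b₂ - b₁ / (1 + b₁ ^ 2)) ^ 2 /
        (Real.sqrt ((b₁ - b₂) ^ 2 + b₁ ^ 2 * b₂ ^ 2) *
          Real.sqrt (((b₁ - b₂) ^ 2 + b₁ ^ 2 * b₂ ^ 2) + 4) -
          ((b₁ - b₂) ^ 2 + b₁ ^ 2 * b₂ ^ 2) + 2 * b₁ ^ 2) := by
  have hH : (0:ℝ) ≤ (b₁ - b₂) ^ 2 + b₁ ^ 2 * b₂ ^ 2 := by positivity
  rw [show (4 + ((b₁ - b₂) ^ 2 + b₁ ^ 2 * b₂ ^ 2)) = ((b₁ - b₂) ^ 2 + b₁ ^ 2 * b₂ ^ 2) + 4 by ring]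
  set H := (b₁ - b₂) ^ 2 + b₁ ^ 2 * b₂ ^ 2 with hHdef
  set s := Real.sqrt H with hs
  set t := Real.sqrt (H + 4) with ht
  have hs2 : s ^ 2 = H := Real.sq_sqrt hH
  have ht2 : t ^ 2 = H + 4 := Real.sq_sqrt (by linarith)
  have h1 : (1:ℝ) + b₁ ^ 2 ≠ 0 := by positivity
  rw [eq_div_iff hden]
  field_simp
  linear_combination ((1+b₁^2)^2*(s*t - H + 2*b₁^2 + 2*t^2)) * hs2 +
    ((1+b₁^2)^2*(s*t - H + 2*b₁^2 + 2*H)) * ht2 + 8*(1+b₁^2)^3 * hHdef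
end

section
/- With h² = (b₁−b₂)² + b₁²b₂², λ = (√(4+h²)+√h²)/2, one has λ² − b₁² − 1 ≥ 0 and λ² − b₂² − 1 ≥ 0 for all real b₁, b₂. -/
/-!
Put `H = h²`. Expanding the square, `λ² = 1 + (H + √((4 + H) H)) / 2`, so `λ² ≥ b² + 1` as soon as
`2b² − H ≤ √((4 + H) H)`, which follows from `b⁴ ≤ H (1 + b²)` by squaring. For `b = b₁` that
inequality holds because `H (1 + b₁²) = b₁⁴ + (b₂ (1 + b₁²) − b₁)²`, and `H` is symmetric in
`b₁, b₂`.
-/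

open Real

lemma sq_add_one_le_sq_sqrt_four_add_add_sqrt_div_two {H b : ℝ} (hH : 0 ≤ H)
    (hb : b ^ 4 ≤ H * (1 + b ^ 2)) :
    b ^ 2 + 1 ≤ ((√(4 + H) + √H) / 2) ^ 2 := by
  have h4H : 0 ≤ 4 + H := by linarith
  have hcross : 2 * b ^ 2 - H ≤ √(4 + H) * √H := by
    rw [← sqrt_mul h4H]
    exact (le_abs_self _).trans (abs_le_sqrt (by nlinarith))
  have hexpand : ((√(4 + H) + √H) / 2) ^ 2 =
      (√(4 + H) ^ 2 + √H ^ 2 + 2 * (√(4 + H) * √H)) / 4 := by ring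
  rw [hexpand, sq_sqrt h4H, sq_sqrt hH]
  linarith

lemma pow_four_le_sq_sub_add_sq_mul_sq_mul_one_add_sq (b c : ℝ) :
    b ^ 4 ≤ ((b - c) ^ 2 + b ^ 2 * c ^ 2) * (1 + b ^ 2) := by
  have hid : ((b - c) ^ 2 + b ^ 2 * c ^ 2) * (1 + b ^ 2) = b ^ 4 + (c * (1 + b ^ 2) - b) ^ 2 := by
    ring
  rw [hid]
  exact le_add_of_nonneg_right (sq_nonneg _)

/-- With `h² = (b₁−b₂)² + b₁²b₂²` and `λ = (√(4+h²)+√(h²))/2`, one has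
`λ² − b₁² − 1 ≥ 0` and `λ² − b₂² − 1 ≥ 0`. -/
theorem stmt8 (b₁ b₂ : ℝ) :
    0 ≤ ((Real.sqrt (4 + ((b₁ - b₂) ^ 2 + b₁ ^ 2 * b₂ ^ 2)) +
        Real.sqrt ((b₁ - b₂) ^ 2 + b₁ ^ 2 * b₂ ^ 2)) / 2) ^ 2 - b₁ ^ 2 - 1 ∧
    0 ≤ ((Real.sqrt (4 + ((b₁ - b₂) ^ 2 + b₁ ^ 2 * b₂ ^ 2)) +
        Real.sqrt ((b₁ - b₂) ^ 2 + b₁ ^ 2 * b₂ ^ 2)) / 2) ^ 2 - b₂ ^ 2 - 1 := by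
  have hH : 0 ≤ (b₁ - b₂) ^ 2 + b₁ ^ 2 * b₂ ^ 2 := by positivity
  have hsymm : (b₂ - b₁) ^ 2 + b₂ ^ 2 * b₁ ^ 2 = (b₁ - b₂) ^ 2 + b₁ ^ 2 * b₂ ^ 2 := by ring
  have hb₁ := pow_four_le_sq_sub_add_sq_mul_sq_mul_one_add_sq b₁ b₂
  have hb₂ := pow_four_le_sq_sub_add_sq_mul_sq_mul_one_add_sq b₂ b₁
  rw [hsymm] at hb₂
  constructor
  · linarith [sq_add_one_le_sq_sqrt_four_add_add_sqrt_div_two hH hb₁]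
  · linarith [sq_add_one_le_sq_sqrt_four_add_add_sqrt_div_two hH hb₂]
end

section
/- Let λ₁, λ₂ > 1 and φ ∈ ℝ. Define β = (λ₁^{-2}+λ₂^{-2})/(1+λ₁^{-2}λ₂^{-2}) and m(λ₁,λ₂,φ) = (λ₁λ₂ + λ₁^{-1}λ₂^{-1})·√(cos²φ + β² sin²φ). Then m(λ₁,λ₂,φ) ≥ λ₂/λ₁ + λ₁/λ₂, uniformly in φ. -/
/-!
With `a = λ₁⁻², b = λ₂⁻²`, clearing denominators gives the identity
`λ₂/λ₁ + λ₁/λ₂ = (λ₁λ₂ + λ₁⁻¹λ₂⁻¹) β`, so it suffices that `β ≤ √(cos²φ + β² sin²φ)`.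
This holds as soon as `β² ≤ 1`, because `cos²φ + β² sin²φ` is a convex combination of
`1` and `β²`; and `β = (a + b)/(1 + ab)` with `a, b ∈ [0, 1]` obeys the velocity-addition
bound `β² ≤ 1`, since `(1 + ab)² - (a + b)² = (1 - a²)(1 - b²)`.
-/

open Real

theorem sq_add_div_one_add_mul_le_one {a b : ℝ} (ha : a ^ 2 ≤ 1) (hb : b ^ 2 ≤ 1) :
    ((a + b) / (1 + a * b)) ^ 2 ≤ 1 := by
  rw [div_pow]
  rcases eq_or_ne (1 + a * b) 0 with h | h
  · simp [h]
  · rw [div_le_one (by positivity)]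
    nlinarith [mul_nonneg (sub_nonneg.mpr ha) (sub_nonneg.mpr hb)]

theorem le_sqrt_cos_sq_add_sq_mul_sin_sq {β : ℝ} (hβ : β ^ 2 ≤ 1) (φ : ℝ) :
    β ≤ √(cos φ ^ 2 + β ^ 2 * sin φ ^ 2) := by
  refine (le_abs_self β).trans (Real.abs_le_sqrt ?_)
  nlinarith [sin_sq_add_cos_sq φ, mul_nonneg (sq_nonneg (cos φ)) (sub_nonneg.mpr hβ)]

theorem div_add_div_eq_mul_add_inv_mul_inv {x y : ℝ} (hx : x ≠ 0) (hy : y ≠ 0) :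
    y / x + x / y =
      (x * y + x⁻¹ * y⁻¹) * ((x⁻¹ ^ 2 + y⁻¹ ^ 2) / (1 + x⁻¹ ^ 2 * y⁻¹ ^ 2)) := by
  field_simp

/-- Lower bound `m(λ₁,λ₂,φ) ≥ λ₂/λ₁ + λ₁/λ₂`, uniform in `φ`, where
`m = (λ₁λ₂ + λ₁⁻¹λ₂⁻¹)√(cos²φ + β² sin²φ)` and
`β = (λ₁⁻² + λ₂⁻²)/(1 + λ₁⁻²λ₂⁻²)`. -/
theorem stmt9 (lam₁ lam₂ φ : ℝ) (h₁ : 1 < lam₁) (h₂ : 1 < lam₂) :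
    lam₂ / lam₁ + lam₁ / lam₂ ≤
      (lam₁ * lam₂ + lam₁⁻¹ * lam₂⁻¹) *
        Real.sqrt (Real.cos φ ^ 2 +
          ((lam₁⁻¹ ^ 2 + lam₂⁻¹ ^ 2) / (1 + lam₁⁻¹ ^ 2 * lam₂⁻¹ ^ 2)) ^ 2 *
            Real.sin φ ^ 2) := by
  have hpos₁ : 0 < lam₁ := zero_lt_one.trans h₁
  have hpos₂ : 0 < lam₂ := zero_lt_one.trans h₂
  have hsq_le_one {x : ℝ} (hx : 1 < x) : (x⁻¹ ^ 2) ^ 2 ≤ 1 :=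
    pow_le_one₀ (by positivity) (pow_le_one₀ (by positivity) (inv_le_one_of_one_le₀ hx.le))
  have hβ := sq_add_div_one_add_mul_le_one (hsq_le_one h₁) (hsq_le_one h₂)
  rw [div_add_div_eq_mul_add_inv_mul_inv hpos₁.ne' hpos₂.ne']
  exact mul_le_mul_of_nonneg_left (le_sqrt_cos_sq_add_sq_mul_sin_sq hβ φ) (by positivity)
end
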